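/- arXiv:2401.05260 — 5 statements merged into one kernel-verified Lean document; each statement's English description precedes it below -/
import Mathlib

section
/- Let α₀ > -1, α₁ > 0, and c > 0. The function φ(I) = e^{-α₁} Γ(1+α₀) I^{α₀} (√(α₁ I / c))^{-α₀} 𝓘_{α₀}(2√(α₁ I / c)), where 𝓘_{α₀} is the modified Bessel function of the first kind of order α₀, has Laplace transform A_s(s) = e^{-α₁} Γ(1+α₀) s^{-(1+α₀)} exp(α₁/(c s)) for s > 0. -/
/-!
Writing `a = α₁ / c`, the function `I ^ ν * √(a I) ^ (-ν) * 𝓘_ν(2 √(a I))` is the power series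
`∑ₖ aᵏ I^(ν+k) / (k! Γ(k+ν+1))` with nonnegative terms. Integrating termwise against `e^(-sI)`,
Euler's integral gives `Γ(ν+k+1) s^(-(ν+k+1))` for the `k`-th term, the Gamma factors cancel, and
what remains is `s^(-(ν+1)) ∑ₖ (a/s)ᵏ / k! = s^(-(ν+1)) exp (a/s)`.
-/

open Real MeasureTheory Set

/-- Modified Bessel function of the first kind of (real) order `ν`, for real `z`. -/
noncomputable def besselI (ν z : ℝ) : ℝ :=
  ∑' k : ℕ, (z / 2) ^ (2 * (k : ℝ) + ν) / ((k.factorial : ℝ) * Real.Gamma ((k : ℝ) + ν + 1))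

open scoped Nat

lemma sqrt_rpow_neg_mul_besselI_two_mul_sqrt {ν x : ℝ} (hx : 0 < x) :
    √x ^ (-ν) * besselI ν (2 * √x) = ∑' k : ℕ, x ^ k / (k ! * Gamma (k + ν + 1)) := by
  rw [besselI, mul_div_cancel_left₀ _ two_ne_zero, ← tsum_mul_left]
  refine tsum_congr fun k => ?_
  have hpow : √x ^ (-ν) * √x ^ (2 * (k : ℝ) + ν) = x ^ k := by
    rw [← rpow_add (sqrt_pos.mpr hx), add_comm _ ν, neg_add_cancel_left, rpow_mul (sqrt_nonneg x),
      rpow_two, sq_sqrt hx.le, rpow_natCast]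
  rw [← mul_div_assoc, hpow]

lemma integral_exp_neg_mul_mul_rpow {q s : ℝ} (hq : -1 < q) (hs : 0 < s) :
    ∫ I in Ioi 0, exp (-s * I) * I ^ q = Gamma (q + 1) * s ^ (-(q + 1)) := by
  simp_rw [mul_comm (exp _)]
  simpa [mul_comm] using integral_rpow_mul_exp_neg_mul_rpow one_pos hq hs

lemma integrableOn_exp_neg_mul_mul_rpow {q s : ℝ} (hq : -1 < q) (hs : 0 < s) :
    IntegrableOn (fun I => exp (-s * I) * I ^ q) (Ioi 0) := by
  simp_rw [mul_comm (exp _)]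
  simpa using integrableOn_rpow_mul_exp_neg_mul_rpow hq one_pos hs

theorem integral_exp_neg_mul_tsum_mul_rpow {ν s : ℝ} (hν : -1 < ν) (hs : 0 < s) {b : ℕ → ℝ}
    (hb : Summable fun k : ℕ => |b k| * (Gamma (ν + k + 1) * s ^ (-(ν + k + 1)))) :
    ∫ I in Ioi 0, exp (-s * I) * ∑' k : ℕ, b k * I ^ (ν + k) =
      ∑' k : ℕ, b k * (Gamma (ν + k + 1) * s ^ (-(ν + k + 1))) := by
  have hq (k : ℕ) : -1 < ν + k := by linarith [k.cast_nonneg (α := ℝ)]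
  have hnorm (k : ℕ) : ∫ I in Ioi 0, ‖b k * (exp (-s * I) * I ^ (ν + k))‖ =
      |b k| * (Gamma (ν + k + 1) * s ^ (-(ν + k + 1))) := by
    rw [← integral_exp_neg_mul_mul_rpow (hq k) hs, ← integral_const_mul]
    refine setIntegral_congr_fun measurableSet_Ioi fun I (hI : 0 < I) => ?_
    rw [norm_mul, Real.norm_eq_abs, Real.norm_eq_abs,
      abs_of_nonneg (by positivity : 0 ≤ exp (-s * I) * I ^ (ν + k))]
  simp_rw [← tsum_mul_left, ← mul_assoc, mul_comm (exp _), mul_assoc]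
  rw [← integral_tsum_of_summable_integral_norm
    (fun k => (integrableOn_exp_neg_mul_mul_rpow (hq k) hs).const_mul (b k))
    (hb.congr fun k => (hnorm k).symm)]
  simp_rw [integral_const_mul, integral_exp_neg_mul_mul_rpow (hq _) hs]

theorem integral_exp_neg_mul_rpow_mul_besselI {ν a s : ℝ} (hν : -1 < ν) (ha : 0 < a)
    (hs : 0 < s) :
    ∫ I in Ioi 0, exp (-s * I) * (I ^ ν * √(a * I) ^ (-ν) * besselI ν (2 * √(a * I))) =
      s ^ (-(ν + 1)) * exp (a / s) := by
  set b : ℕ → ℝ := fun k => a ^ k / (k ! * Gamma (k + ν + 1))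
  have hΓ (k : ℕ) : 0 < Gamma (k + ν + 1) :=
    Gamma_pos_of_pos (by linarith [k.cast_nonneg (α := ℝ)])
  have hb (k : ℕ) : 0 ≤ b k := div_nonneg (by positivity) (mul_pos (by positivity) (hΓ k)).le
  have hterm (k : ℕ) : b k * (Gamma (ν + k + 1) * s ^ (-(ν + k + 1))) =
      s ^ (-(ν + 1)) * ((a / s) ^ k / k !) := by
    rw [show -(ν + k + 1) = -(ν + 1) + -(k : ℝ) by ring, rpow_add hs, rpow_neg hs.le (k : ℝ),
      rpow_natCast, show ν + k + 1 = k + ν + 1 by ring, div_pow]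
    simp only [b]
    field_simp [(hΓ k).ne']
  have hseries : ∀ I ∈ Ioi (0 : ℝ),
      exp (-s * I) * (I ^ ν * √(a * I) ^ (-ν) * besselI ν (2 * √(a * I))) =
        exp (-s * I) * ∑' k : ℕ, b k * I ^ (ν + k) := by
    intro I (hI : 0 < I)
    rw [mul_assoc (I ^ ν), sqrt_rpow_neg_mul_besselI_two_mul_sqrt (by positivity),
      ← tsum_mul_left]
    congr 1
    refine tsum_congr fun k => ?_
    rw [rpow_add hI, rpow_natCast, mul_pow]
    ring
  have hexp : HasSum (fun k : ℕ => (a / s) ^ k / k !) (exp (a / s)) :=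
    Real.exp_eq_exp_ℝ ▸ NormedSpace.expSeries_div_hasSum_exp (a / s)
  rw [setIntegral_congr_fun measurableSet_Ioi hseries,
    integral_exp_neg_mul_tsum_mul_rpow hν hs (by simpa only [abs_of_nonneg (hb _), hterm]
      using (Real.summable_pow_div_factorial (a / s)).mul_left _),
    tsum_congr hterm, tsum_mul_left, hexp.tsum_eq]

theorem laplace_of_bessel_density (α₀ α₁ c : ℝ) (hα₀ : -1 < α₀) (hα₁ : 0 < α₁) (hc : 0 < c) :
    ∀ s : ℝ, 0 < s →
      ∫ I in Ioi (0:ℝ),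
          Real.exp (-s * I) *
            (Real.exp (-α₁) * Real.Gamma (1 + α₀) * I ^ α₀ *
              (Real.sqrt (α₁ * I / c)) ^ (-α₀) * besselI α₀ (2 * Real.sqrt (α₁ * I / c)))
        = Real.exp (-α₁) * Real.Gamma (1 + α₀) * s ^ (-(1 + α₀)) * Real.exp (α₁ / (c * s)) := by
  intro s hs
  have key := integral_exp_neg_mul_rpow_mul_besselI hα₀ (div_pos hα₁ hc) hs
  simp_rw [div_mul_eq_mul_div α₁ c, div_div] at key
  calc _ = exp (-α₁) * Gamma (1 + α₀) * ∫ I in Ioi 0,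
        exp (-s * I) * (I ^ α₀ * √(α₁ * I / c) ^ (-α₀) * besselI α₀ (2 * √(α₁ * I / c))) := by
        rw [← integral_const_mul]
        congr with I
        ring
    _ = _ := by rw [key, add_comm α₀]; ring
end

section
/- Let λ₁, λ₂, λ₃ > 0, 𝒫 = (λ₁+λ₂+λ₃)/3, p > 0, θ ∈ [0,1]. Then Σ_{i=1}^3 log(λ_i / (θp + (1-θ)λ_i)) ≤ 3 log(𝒫 / (θp + (1-θ)𝒫)). -/
set_option maxHeartbeats 1000000


open Real

theorem jensen_log_ratio (l₁ l₂ l₃ p θ : ℝ)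
    (h1 : 0 < l₁) (h2 : 0 < l₂) (h3 : 0 < l₃) (hp : 0 < p)
    (hθ : θ ∈ Set.Icc (0:ℝ) 1) :
    Real.log (l₁ / (θ * p + (1 - θ) * l₁)) +
      Real.log (l₂ / (θ * p + (1 - θ) * l₂)) +
        Real.log (l₃ / (θ * p + (1 - θ) * l₃)) ≤
      3 * Real.log (((l₁ + l₂ + l₃) / 3) / (θ * p + (1 - θ) * ((l₁ + l₂ + l₃) / 3))) := by
  obtain ⟨hθ0, hθ1⟩ := hθ
  have hb0 : (0:ℝ) ≤ 1 - θ := by linarith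
  have ha0 : (0:ℝ) ≤ θ * p := mul_nonneg hθ0 hp.le
  have key : ∀ l : ℝ, 0 < l → 0 < θ * p + (1 - θ) * l := by
    intro l hl
    rcases eq_or_lt_of_le hθ0 with h | h
    · rw [← h]; ring_nf; linarith
    · nlinarith [mul_nonneg hb0 hl.le, mul_pos h hp]
  have d1 := key l₁ h1
  have d2 := key l₂ h2
  have d3 := key l₃ h3
  have hm : 0 < (l₁ + l₂ + l₃) / 3 := by linarith
  have dm := key _ hm
  -- the key algebraic inequality
  have main : l₁ / (θ * p + (1 - θ) * l₁) * (l₂ / (θ * p + (1 - θ) * l₂)) *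
      (l₃ / (θ * p + (1 - θ) * l₃)) ≤
      ((l₁ + l₂ + l₃) / 3 / (θ * p + (1 - θ) * ((l₁ + l₂ + l₃) / 3))) ^ 3 := by
    rw [div_mul_div_comm, div_mul_div_comm, div_pow,
      div_le_div_iff₀ (by positivity) (by positivity)]
    have A1 : 0 ≤ (l₁ + l₂ + l₃) ^ 3 - 27 * (l₁ * l₂ * l₃) := by
      nlinarith [sq_nonneg (l₁ - l₂), sq_nonneg (l₂ - l₃), sq_nonneg (l₁ - l₃),
        mul_pos h1 h2, mul_pos h2 h3, mul_pos h1 h3, h1.le, h2.le, h3.le,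
        mul_nonneg (mul_nonneg h1.le h1.le) h1.le]
    have A2 : 0 ≤ (l₁ + l₂ + l₃) * (l₁ * l₂ + l₂ * l₃ + l₁ * l₃) - 9 * (l₁ * l₂ * l₃) := by
      nlinarith [mul_nonneg h1.le (sq_nonneg (l₂ - l₃)), mul_nonneg h2.le (sq_nonneg (l₁ - l₃)),
        mul_nonneg h3.le (sq_nonneg (l₁ - l₂))]
    have t1 : 0 ≤ (θ * p) ^ 3 * ((l₁ + l₂ + l₃) ^ 3 - 27 * (l₁ * l₂ * l₃)) :=
      mul_nonneg (pow_nonneg ha0 3) A1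
    have t2 : 0 ≤ (θ * p) ^ 2 * (1 - θ) * (l₁ + l₂ + l₃) *
        ((l₁ + l₂ + l₃) ^ 3 - 27 * (l₁ * l₂ * l₃)) :=
      mul_nonneg (mul_nonneg (mul_nonneg (pow_nonneg ha0 2) hb0) (by linarith)) A1
    have t3 : 0 ≤ (θ * p) * (1 - θ) ^ 2 * (l₁ + l₂ + l₃) ^ 2 *
        ((l₁ + l₂ + l₃) * (l₁ * l₂ + l₂ * l₃ + l₁ * l₃) - 9 * (l₁ * l₂ * l₃)) :=
      mul_nonneg (mul_nonneg (mul_nonneg ha0 (pow_nonneg hb0 2)) (sq_nonneg _)) A2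
    linarith [t1, t2, t3]
  have hx : 0 < l₁ / (θ * p + (1 - θ) * l₁) * (l₂ / (θ * p + (1 - θ) * l₂)) *
      (l₃ / (θ * p + (1 - θ) * l₃)) := by positivity
  have := Real.log_le_log hx main
  rw [Real.log_mul (by positivity) (by positivity), Real.log_mul (by positivity) (by positivity),
    Real.log_pow] at this
  push_cast at this
  linarith
end

section
/- Fix p > 0, θ ∈ [0,1], and λ₁, λ₂, λ₃ > 0 with mean 𝒫 = (λ₁+λ₂+λ₃)/3. Define φ(ν) = Σ_{i=1}^3 log( θ p + (1-θ)( ν λ_i + (1-ν) 𝒫 ) ) on the set of ν where all arguments are positive. Then φ is concave, φ'(0) = 0 (so φ attains its maximum at ν = 0), and φ(-1/2) ≥ φ(1); consequently φ(ν) ≥ φ(1) for all ν ∈ [-1/2, 1]. -/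
/-!
Writing `sᵢ = θ p + (1 - θ) λᵢ` and `m` for their mean, the `i`-th argument is the affine
function `ν sᵢ + (1 - ν) m` of `ν`, so `φ` is a sum of logarithms of affine functions, hence
concave, and its derivative at `0` is `∑ (sᵢ - m) / m = 0`. At `ν = -1/2` the `i`-th argument is
the arithmetic mean of the two other `sⱼ`, so AM-GM gives `φ(-1/2) ≥ ∑ log sᵢ = φ(1)`. A concave
function on an interval is bounded below by its smaller endpoint value.
-/

open Real Set

theorem ConcaveOn.finset_sum {𝕜 E β ι : Type*} [Semiring 𝕜] [PartialOrder 𝕜] [AddCommMonoid E]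
    [AddCommMonoid β] [PartialOrder β] [IsOrderedAddMonoid β] [SMul 𝕜 E] [Module 𝕜 β]
    {s : Set E} (hs : Convex 𝕜 s) (t : Finset ι) {f : ι → E → β}
    (hf : ∀ i ∈ t, ConcaveOn 𝕜 s (f i)) : ConcaveOn 𝕜 s (∑ i ∈ t, f i) :=
  Finset.sum_induction f (ConcaveOn 𝕜 s) (fun _ _ => ConcaveOn.add) (concaveOn_const (0 : β) hs) hf

theorem concaveOn_log_comp_affineMap {E : Type*} [AddCommGroup E] [Module ℝ E]
    (g : E →ᵃ[ℝ] ℝ) {t : Set E} (ht : Convex ℝ t) (hg : ∀ x ∈ t, 0 < g x) :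
    ConcaveOn ℝ t (log ∘ g) :=
  (strictConcaveOn_log_Ioi.concaveOn.comp_affineMap g).subset hg ht

section MixLogSum

variable {ι : Type*} [Fintype ι] (s : ι → ℝ) (m : ℝ)

noncomputable def mixLogSum (ν : ℝ) : ℝ := ∑ i, log (ν * s i + (1 - ν) * m)

variable {s m}

theorem concaveOn_mixLogSum {t : Set ℝ} (ht : Convex ℝ t)
    (hpos : ∀ ν ∈ t, ∀ i, 0 < ν * s i + (1 - ν) * m) : ConcaveOn ℝ t (mixLogSum s m) := by
  have hsum : mixLogSum s m = ∑ i, log ∘ AffineMap.lineMap m (s i) := by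
    ext ν
    simp only [mixLogSum, Finset.sum_apply, Function.comp_apply, AffineMap.lineMap_apply_module,
      smul_eq_mul]
    exact Finset.sum_congr rfl fun i _ => congrArg log (by ring)
  rw [hsum]
  refine ConcaveOn.finset_sum ht _ fun i _ => concaveOn_log_comp_affineMap _ ht fun ν hν => ?_
  simpa [AffineMap.lineMap_apply_module, add_comm] using hpos ν hν i

theorem hasDerivAt_mixLogSum_zero (hm : m ≠ 0) :
    HasDerivAt (mixLogSum s m) (∑ i, (s i - m) / m) 0 := by
  have hterm (i : ι) : HasDerivAt (fun ν => log (ν * s i + (1 - ν) * m)) ((s i - m) / m) 0 := by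
    have haff : HasDerivAt (fun ν : ℝ => ν * s i + (1 - ν) * m) (s i - m) 0 := by
      have hlin : (fun ν : ℝ => ν * s i + (1 - ν) * m) = fun ν => ν * (s i - m) + m := by
        funext ν; ring
      exact hlin ▸ (hasDerivAt_mul_const _).add_const m
    simpa using haff.log (by simpa using hm)
  exact HasDerivAt.fun_sum fun i _ => hterm i

theorem deriv_mixLogSum_zero (hm : m ≠ 0) (hsum : ∑ i, s i = Fintype.card ι * m) :
    deriv (mixLogSum s m) 0 = 0 := by
  rw [(hasDerivAt_mixLogSum_zero hm).deriv, ← Finset.sum_div, Finset.sum_sub_distrib, hsum]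
  simp

end MixLogSum

theorem log_add_log_le_two_mul_log_add_div_two {a b : ℝ} (ha : 0 < a) (hb : 0 < b) :
    log a + log b ≤ 2 * log ((a + b) / 2) := by
  rw [← log_mul ha.ne' hb.ne', ← log_rpow (by positivity), rpow_two]
  exact log_le_log (by positivity) (by nlinarith [sq_nonneg (a - b)])

-- `3 (ν x + (1 - ν) m) = (1 + 2ν) x + (1 - ν) (3m - x)`, with nonnegative weights not both zero
theorem mul_add_one_sub_mul_pos {x m ν : ℝ} (hν : ν ∈ Icc (-(1 / 2) : ℝ) 1) (hx : 0 < x)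
    (hx' : 0 < 3 * m - x) : 0 < ν * x + (1 - ν) * m := by
  obtain ⟨hν₀, hν₁⟩ := hν
  nlinarith [mul_nonneg (sub_nonneg.2 hν₁) hx'.le,
    mul_nonneg (by linarith : (0 : ℝ) ≤ 1 + 2 * ν) hx.le, mul_pos hx hx']

section Three

variable {s : Fin 3 → ℝ} {m : ℝ}

theorem mix_pos_of_mem_Icc (hs : ∀ i, 0 < s i) (hsum : ∑ i, s i = 3 * m) {ν : ℝ}
    (hν : ν ∈ Icc (-(1 / 2) : ℝ) 1) (i : Fin 3) : 0 < ν * s i + (1 - ν) * m := by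
  have hrest : 0 < 3 * m - s i := by
    rw [← hsum, Fin.sum_univ_three]
    fin_cases i <;> simp only [Fin.zero_eta, Fin.mk_one, Fin.reduceFinMk] <;>
      linarith [hs 0, hs 1, hs 2]
  exact mul_add_one_sub_mul_pos hν (hs i) hrest

theorem mixLogSum_one_le_neg_half (hs : ∀ i, 0 < s i) (hsum : ∑ i, s i = 3 * m) :
    mixLogSum s m 1 ≤ mixLogSum s m (-(1 / 2)) := by
  rw [Fin.sum_univ_three] at hsum
  have hmid (i j k : Fin 3) (h : s i + s j + s k = 3 * m) :
      -(1 / 2) * s i + (1 - -(1 / 2)) * m = (s j + s k) / 2 := by linarith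
  simp only [mixLogSum, Fin.sum_univ_three, one_mul, sub_self, zero_mul, add_zero,
    hmid 0 1 2 hsum, hmid 1 0 2 (by linarith), hmid 2 0 1 (by linarith)]
  linarith [log_add_log_le_two_mul_log_add_div_two (hs 1) (hs 2),
    log_add_log_le_two_mul_log_add_div_two (hs 0) (hs 2),
    log_add_log_le_two_mul_log_add_div_two (hs 0) (hs 1)]

end Three

theorem phi_concave_max (p θ : ℝ) (hp : 0 < p) (hθ : θ ∈ Icc (0:ℝ) 1)
    (lam : Fin 3 → ℝ) (hlam : ∀ i, 0 < lam i) (Pbar : ℝ) (hPbar : Pbar = (∑ i, lam i) / 3)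
    (φ : ℝ → ℝ)
    (hφ : φ = fun ν => ∑ i, Real.log (θ * p + (1 - θ) * (ν * lam i + (1 - ν) * Pbar))) :
    ConcaveOn ℝ (Icc (-(1/2) : ℝ) 1) φ ∧
    deriv φ 0 = 0 ∧
    φ (-(1/2)) ≥ φ 1 ∧
    ∀ ν ∈ Icc (-(1/2) : ℝ) 1, φ ν ≥ φ 1 := by
  set s : Fin 3 → ℝ := fun i => θ * p + (1 - θ) * lam i
  set m := θ * p + (1 - θ) * Pbar
  have hmix {x : ℝ} (hx : 0 < x) : 0 < θ * p + (1 - θ) * x :=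
    convex_Ioi (0 : ℝ) hp hx hθ.1 (sub_nonneg.2 hθ.2) (by ring)
  have hs (i : Fin 3) : 0 < s i := hmix (hlam i)
  have hsum : ∑ i, s i = 3 * m := by
    simp only [s, m, hPbar, Fin.sum_univ_three]; ring
  have hφ' : φ = mixLogSum s m := by
    rw [hφ]; ext ν; exact Finset.sum_congr rfl fun i _ => congrArg log (by ring)
  rw [hφ']
  have hconc := concaveOn_mixLogSum (convex_Icc _ _) fun ν hν => mix_pos_of_mem_Icc hs hsum hν
  have hend := mixLogSum_one_le_neg_half hs hsum
  have hm : 0 < m :=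
    hmix (hPbar ▸ div_pos (Finset.sum_pos (fun i _ => hlam i) Finset.univ_nonempty) three_pos)
  refine ⟨hconc, deriv_mixLogSum_zero hm.ne' (by simpa using hsum), hend, fun ν hν => ?_⟩
  have hmin :=
    hconc.min_le_of_mem_Icc (left_mem_Icc.2 (by norm_num)) (right_mem_Icc.2 (by norm_num)) hν
  rwa [min_eq_right hend] at hmin
end

section
/- Let ε^K_E, ε^I_E : (0,∞) → ℝ be C¹ strictly increasing functions (caloric equations of state of the translational and internal modes) with derivatives c_v^K(T) = ε^K_E'(T) ≥ 0 and c_v^I(T) = ε^I_E'(T) ≥ 0. Fix temperatures T, T^K, T^I > 0 with ε^K_E(T^K) + ε^I_E(T^I) = ε^K_E(T) + ε^I_E(T). For θ ∈ [0,1] define T^K_rel(θ), T^I_rel(θ) by ε^K_E(T^K_rel) = (1-θ)ε^K_E(T^K) + θ ε^K_E(T) and ε^I_E(T^I_rel) = (1-θ)ε^I_E(T^I) + θ ε^I_E(T), and set S(θ) = ∫_{T_*}^{T^K_rel(θ)} c_v^K(τ)/τ dτ + ∫_{T_*}^{T^I_rel(θ)} c_v^I(τ)/τ dτ. Then S is concave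 on [0,1] with S'(1) = 0, hence S is nondecreasing on [0,1] and S(0) ≤ S(θ) for all θ ∈ [0,1]. -/
open Real Set intervalIntegral MeasureTheory Filter Topology

lemma ftc_bounds (ε cv : ℝ → ℝ)
    (h' : ∀ t ∈ Ioi (0:ℝ), HasDerivAt ε (cv t) t)
    (hcv : ∀ t ∈ Ioi (0:ℝ), 0 < cv t)
    {x y : ℝ} (hx : 0 < x) (hxy : x ≤ y) :
    IntervalIntegrable (fun τ => cv τ / τ) volume x y ∧
    (ε y - ε x) / y ≤ (∫ τ in x..y, cv τ / τ) ∧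
    (∫ τ in x..y, cv τ / τ) ≤ (ε y - ε x) / x := by
  have hy : 0 < y := lt_of_lt_of_le hx hxy
  have hsub : uIcc x y ⊆ Ioi 0 := by
    rw [uIcc_of_le hxy]
    intro t ht; exact lt_of_lt_of_le hx ht.1
  have hcont : ContinuousOn ε (uIcc x y) := fun t ht =>
    ((h' t (hsub ht)).continuousAt).continuousWithinAt
  have hint_cv : IntervalIntegrable cv volume x y := by
    apply intervalIntegrable_deriv_of_nonneg hcont
    · intro t ht
      rw [min_eq_left hxy, max_eq_right hxy] at ht
      exact h' t (lt_trans hx ht.1)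
    · intro t ht
      rw [min_eq_left hxy, max_eq_right hxy] at ht
      exact (hcv t (lt_trans hx ht.1)).le
  have hftc : (∫ τ in x..y, cv τ) = ε y - ε x :=
    integral_eq_sub_of_hasDerivAt (fun t ht => h' t (hsub ht)) hint_cv
  have hinv : ContinuousOn (fun τ : ℝ => τ⁻¹) (uIcc x y) :=
    ContinuousOn.inv₀ continuousOn_id (fun t ht => ne_of_gt (hsub ht))
  have hint : IntervalIntegrable (fun τ => cv τ / τ) volume x y := by
    simpa [div_eq_mul_inv] using hint_cv.mul_continuousOn hinv
  refine ⟨hint, ?_, ?_⟩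
  · have hmono : ∀ t ∈ Icc x y, cv t / y ≤ cv t / t := by
      intro t ht
      exact div_le_div_of_nonneg_left (hcv t (lt_of_lt_of_le hx ht.1)).le
        (lt_of_lt_of_le hx ht.1) ht.2
    have := integral_mono_on hxy (hint_cv.div_const y) hint hmono
    calc (ε y - ε x) / y = (∫ τ in x..y, cv τ) / y := by rw [hftc]
      _ = ∫ τ in x..y, cv τ / y := (intervalIntegral.integral_div y cv).symm
      _ ≤ _ := this
  · have hmono : ∀ t ∈ Icc x y, cv t / t ≤ cv t / x := by
      intro t ht
      exact div_le_div_of_nonneg_left (hcv t (lt_of_lt_of_le hx ht.1)).le hx ht.1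
    have := integral_mono_on hxy hint (hint_cv.div_const x) hmono
    calc (∫ τ in x..y, cv τ / τ) ≤ ∫ τ in x..y, cv τ / x := this
      _ = (∫ τ in x..y, cv τ) / x := intervalIntegral.integral_div x cv
      _ = (ε y - ε x) / x := by rw [hftc]

lemma S_aux
    (εK εI cvK cvI : ℝ → ℝ)
    (hεK : StrictMonoOn εK (Ioi 0)) (hεI : StrictMonoOn εI (Ioi 0))
    (hK' : ∀ t ∈ Ioi (0:ℝ), HasDerivAt εK (cvK t) t)
    (hI' : ∀ t ∈ Ioi (0:ℝ), HasDerivAt εI (cvI t) t)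
    (hcvK : ∀ t ∈ Ioi (0:ℝ), 0 < cvK t) (hcvI : ∀ t ∈ Ioi (0:ℝ), 0 < cvI t)
    (T TK TI Tstar : ℝ) (hT : 0 < T) (hTK : 0 < TK) (hTI : 0 < TI) (hTstar : 0 < Tstar)
    (hcons : εK TK + εI TI = εK T + εI T)
    (TKrel TIrel : ℝ → ℝ)
    (hTKrel : ∀ θ ∈ Icc (0:ℝ) 1, 0 < TKrel θ ∧
      εK (TKrel θ) = (1 - θ) * εK TK + θ * εK T)
    (hTIrel : ∀ θ ∈ Icc (0:ℝ) 1, 0 < TIrel θ ∧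
      εI (TIrel θ) = (1 - θ) * εI TI + θ * εI T)
    (S : ℝ → ℝ)
    (hS : ∀ θ, S θ = (∫ τ in Tstar..TKrel θ, cvK τ / τ) + ∫ τ in Tstar..TIrel θ, cvI τ / τ)
    (ha : εK TK ≤ εK T) :
    ConcaveOn ℝ (Icc (0:ℝ) 1) S ∧
    derivWithin S (Icc (0:ℝ) 1) 1 = 0 ∧
    MonotoneOn S (Icc (0:ℝ) 1) ∧
    ∀ θ ∈ Icc (0:ℝ) 1, S 0 ≤ S θ := by
  set a : ℝ := εK T - εK TK with hadef
  have ha0 : 0 ≤ a := sub_nonneg.2 ha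
  have hb : εI TI - εI T = a := by simp only [hadef]; linarith
  have hmem0 : (0:ℝ) ∈ Icc (0:ℝ) 1 := ⟨le_refl 0, zero_le_one⟩
  have hmem1 : (1:ℝ) ∈ Icc (0:ℝ) 1 := ⟨zero_le_one, le_refl 1⟩
  have pK : ∀ θ ∈ Icc (0:ℝ) 1, 0 < TKrel θ := fun θ h => (hTKrel θ h).1
  have pI : ∀ θ ∈ Icc (0:ℝ) 1, 0 < TIrel θ := fun θ h => (hTIrel θ h).1
  have eK : ∀ θ ∈ Icc (0:ℝ) 1, εK (TKrel θ) = εK TK + θ * a := by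
    intro θ h; rw [(hTKrel θ h).2, hadef]; ring
  have eI : ∀ θ ∈ Icc (0:ℝ) 1, εI (TIrel θ) = εI TI - θ * a := by
    intro θ h; rw [(hTIrel θ h).2]; linear_combination (-θ) * hb
  have TKle : ∀ θ1 ∈ Icc (0:ℝ) 1, ∀ θ2 ∈ Icc (0:ℝ) 1, θ1 ≤ θ2 → TKrel θ1 ≤ TKrel θ2 := by
    intro θ1 h1 θ2 h2 h
    refine (hεK.le_iff_le (pK θ1 h1) (pK θ2 h2)).1 ?_
    rw [eK θ1 h1, eK θ2 h2]
    nlinarith [mul_le_mul_of_nonneg_right h ha0]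
  have TIle : ∀ θ1 ∈ Icc (0:ℝ) 1, ∀ θ2 ∈ Icc (0:ℝ) 1, θ1 ≤ θ2 → TIrel θ2 ≤ TIrel θ1 := by
    intro θ1 h1 θ2 h2 h
    refine (hεI.le_iff_le (pI θ2 h2) (pI θ1 h1)).1 ?_
    rw [eI θ1 h1, eI θ2 h2]
    nlinarith [mul_le_mul_of_nonneg_right h ha0]
  have TKleT : ∀ θ ∈ Icc (0:ℝ) 1, TKrel θ ≤ T := by
    intro θ h
    refine (hεK.le_iff_le (pK θ h) hT).1 ?_
    rw [eK θ h]
    nlinarith [mul_le_mul_of_nonneg_right h.2 ha0]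
  have TleTI : ∀ θ ∈ Icc (0:ℝ) 1, T ≤ TIrel θ := by
    intro θ h
    refine (hεI.le_iff_le hT (pI θ h)).1 ?_
    rw [eI θ h]
    nlinarith [mul_le_mul_of_nonneg_right h.2 ha0, hb]
  have TKrel1 : TKrel 1 = T := by
    refine hεK.injOn (pK 1 hmem1) hT ?_
    rw [eK 1 hmem1, hadef]; ring
  have TIrel1 : TIrel 1 = T := by
    refine hεI.injOn (pI 1 hmem1) hT ?_
    rw [eI 1 hmem1]; linear_combination hb
  have intK : ∀ x, 0 < x → ∀ y, 0 < y →
      IntervalIntegrable (fun τ => cvK τ / τ) volume x y := by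
    intro x hx y hy
    rcases le_total x y with h | h
    · exact (ftc_bounds εK cvK hK' hcvK hx h).1
    · exact ((ftc_bounds εK cvK hK' hcvK hy h).1).symm
  have intI : ∀ x, 0 < x → ∀ y, 0 < y →
      IntervalIntegrable (fun τ => cvI τ / τ) volume x y := by
    intro x hx y hy
    rcases le_total x y with h | h
    · exact (ftc_bounds εI cvI hI' hcvI hx h).1
    · exact ((ftc_bounds εI cvI hI' hcvI hy h).1).symm
  have key : ∀ θ1 ∈ Icc (0:ℝ) 1, ∀ θ2 ∈ Icc (0:ℝ) 1, θ1 ≤ θ2 →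
      (a / TKrel θ2 - a / TIrel θ2) * (θ2 - θ1) ≤ S θ2 - S θ1 ∧
      S θ2 - S θ1 ≤ (a / TKrel θ1 - a / TIrel θ1) * (θ2 - θ1) := by
    intro θ1 h1 θ2 h2 h12
    have hKle : TKrel θ1 ≤ TKrel θ2 := TKle θ1 h1 θ2 h2 h12
    obtain ⟨-, hK1, hK2⟩ := ftc_bounds εK cvK hK' hcvK (pK θ1 h1) hKle
    have hKval : εK (TKrel θ2) - εK (TKrel θ1) = (θ2 - θ1) * a := by
      rw [eK θ1 h1, eK θ2 h2]; ring
    rw [hKval] at hK1 hK2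
    have hIle : TIrel θ2 ≤ TIrel θ1 := TIle θ1 h1 θ2 h2 h12
    obtain ⟨-, hI1, hI2⟩ := ftc_bounds εI cvI hI' hcvI (pI θ2 h2) hIle
    have hIval : εI (TIrel θ1) - εI (TIrel θ2) = (θ2 - θ1) * a := by
      rw [eI θ1 h1, eI θ2 h2]; ring
    rw [hIval] at hI1 hI2
    have hSd : S θ2 - S θ1 = (∫ τ in TKrel θ1..TKrel θ2, cvK τ / τ)
        - (∫ τ in TIrel θ2..TIrel θ1, cvI τ / τ) := by
      rw [hS θ2, hS θ1]
      have e1 := integral_interval_sub_left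
        (intK Tstar hTstar _ (pK θ2 h2)) (intK Tstar hTstar _ (pK θ1 h1))
      have e2 := integral_interval_sub_left
        (intI Tstar hTstar _ (pI θ1 h1)) (intI Tstar hTstar _ (pI θ2 h2))
      linarith [e1, e2]
    rw [hSd]
    constructor
    · have e : (a / TKrel θ2 - a / TIrel θ2) * (θ2 - θ1)
          = (θ2 - θ1) * a / TKrel θ2 - (θ2 - θ1) * a / TIrel θ2 := by ring
      rw [e]; linarith
    · have e : (a / TKrel θ1 - a / TIrel θ1) * (θ2 - θ1)
          = (θ2 - θ1) * a / TKrel θ1 - (θ2 - θ1) * a / TIrel θ1 := by ring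
      rw [e]; linarith
  have gnn : ∀ θ ∈ Icc (0:ℝ) 1, 0 ≤ a / TKrel θ - a / TIrel θ := by
    intro θ h
    have h1 : TKrel θ ≤ TIrel θ := le_trans (TKleT θ h) (TleTI θ h)
    have := div_le_div_of_nonneg_left ha0 (pK θ h) h1
    linarith
  have hmono : MonotoneOn S (Icc (0:ℝ) 1) := by
    intro θ1 h1 θ2 h2 h12
    have k := (key θ1 h1 θ2 h2 h12).1
    nlinarith [mul_nonneg (gnn θ2 h2) (sub_nonneg.2 h12)]
  have hconc : ConcaveOn ℝ (Icc (0:ℝ) 1) S := by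
    refine concaveOn_of_slope_anti_adjacent (convex_Icc 0 1) ?_
    intro x y z hx hz hxy hyz
    have hy : y ∈ Icc (0:ℝ) 1 := ⟨le_trans hx.1 hxy.le, le_trans hyz.le hz.2⟩
    have k1 := (key x hx y hy hxy.le).1
    have k2 := (key y hy z hz hyz.le).2
    have d1 : (S z - S y) / (z - y) ≤ a / TKrel y - a / TIrel y :=
      (div_le_iff₀ (sub_pos.2 hyz)).2 k2
    have d2 : a / TKrel y - a / TIrel y ≤ (S y - S x) / (y - x) :=
      (le_div_iff₀ (sub_pos.2 hxy)).2 k1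
    linarith
  have hTKtend : Tendsto TKrel (𝓝[Icc (0:ℝ) 1 \ {1}] 1) (𝓝 T) := by
    rw [tendsto_order]
    constructor
    · intro c hc
      rcases le_or_gt c 0 with h0 | h0
      · filter_upwards [self_mem_nhdsWithin] with θ hθ
        exact lt_of_le_of_lt h0 (pK θ hθ.1)
      · have hcε : εK c < εK TK + 1 * a := by
          have := hεK h0 hT hc
          rw [hadef]; linarith
        have hcont : Tendsto (fun θ : ℝ => εK TK + θ * a) (𝓝[Icc (0:ℝ) 1 \ {1}] 1)
            (𝓝 (εK TK + 1 * a)) :=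
          ((continuous_const.add (continuous_id.mul continuous_const)).tendsto 1).mono_left
            nhdsWithin_le_nhds
        filter_upwards [hcont.eventually (eventually_gt_nhds hcε), self_mem_nhdsWithin]
          with θ hθ1 hθ2
        by_contra hcon
        push_neg at hcon
        have : εK (TKrel θ) ≤ εK c := (hεK.le_iff_le (pK θ hθ2.1) h0).2 hcon
        rw [eK θ hθ2.1] at this
        linarith
    · intro c hc
      filter_upwards [self_mem_nhdsWithin] with θ hθ
      exact lt_of_le_of_lt (TKleT θ hθ.1) hc
  have hTItend : Tendsto TIrel (𝓝[Icc (0:ℝ) 1 \ {1}] 1) (𝓝 T) := by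
    rw [tendsto_order]
    constructor
    · intro c hc
      filter_upwards [self_mem_nhdsWithin] with θ hθ
      exact lt_of_lt_of_le hc (TleTI θ hθ.1)
    · intro c hc
      have h0 : (0:ℝ) < c := lt_trans hT hc
      have hcε : εI TI - 1 * a < εI c := by
        have := hεI hT h0 hc
        linarith [hb]
      have hcont : Tendsto (fun θ : ℝ => εI TI - θ * a) (𝓝[Icc (0:ℝ) 1 \ {1}] 1)
          (𝓝 (εI TI - 1 * a)) :=
        ((continuous_const.sub (continuous_id.mul continuous_const)).tendsto 1).mono_left
          nhdsWithin_le_nhds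
      filter_upwards [hcont.eventually (eventually_lt_nhds hcε), self_mem_nhdsWithin]
        with θ hθ1 hθ2
      by_contra hcon
      push_neg at hcon
      have : εI c ≤ εI (TIrel θ) := (hεI.le_iff_le h0 (pI θ hθ2.1)).2 hcon
      rw [eI θ hθ2.1] at this
      linarith
  have hderiv : HasDerivWithinAt S 0 (Icc (0:ℝ) 1) 1 := by
    rw [hasDerivWithinAt_iff_tendsto_slope]
    have hg : Tendsto (fun θ => a / TKrel θ - a / TIrel θ) (𝓝[Icc (0:ℝ) 1 \ {1}] 1)
        (𝓝 0) := by
      have h1 : Tendsto (fun θ => a / TKrel θ) (𝓝[Icc (0:ℝ) 1 \ {1}] 1) (𝓝 (a / T)) :=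
        Tendsto.div tendsto_const_nhds hTKtend (ne_of_gt hT)
      have h2 : Tendsto (fun θ => a / TIrel θ) (𝓝[Icc (0:ℝ) 1 \ {1}] 1) (𝓝 (a / T)) :=
        Tendsto.div tendsto_const_nhds hTItend (ne_of_gt hT)
      simpa using h1.sub h2
    refine tendsto_of_tendsto_of_tendsto_of_le_of_le' tendsto_const_nhds hg ?_ ?_
    · filter_upwards [self_mem_nhdsWithin] with θ hθ
      have hlt : θ < 1 := lt_of_le_of_ne hθ.1.2 hθ.2
      have k := (key θ hθ.1 1 hmem1 hlt.le).1
      rw [TKrel1, TIrel1] at k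
      have hk : (0:ℝ) ≤ S 1 - S θ := by
        have : (a / T - a / T) * (1 - θ) = 0 := by ring
        linarith [k, this.symm.le]
      rw [slope_def_field]
      have e : (S θ - S 1) / (θ - 1) = (S 1 - S θ) / (1 - θ) := by
        rw [← neg_div_neg_eq]; ring_nf
      rw [e]
      exact div_nonneg hk (by linarith)
    · filter_upwards [self_mem_nhdsWithin] with θ hθ
      have hlt : θ < 1 := lt_of_le_of_ne hθ.1.2 hθ.2
      have k := (key θ hθ.1 1 hmem1 hlt.le).2
      rw [slope_def_field]
      have e : (S θ - S 1) / (θ - 1) = (S 1 - S θ) / (1 - θ) := by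
        rw [← neg_div_neg_eq]; ring_nf
      rw [e]
      exact (div_le_iff₀ (sub_pos.2 hlt)).2 (by linarith)
  refine ⟨hconc, hderiv.derivWithin (uniqueDiffOn_Icc zero_lt_one 1 hmem1), hmono,
    fun θ hθ => hmono hmem0 hθ hθ.1⟩

theorem S_concave_nondecreasing
    (εK εI cvK cvI : ℝ → ℝ)
    (hεK : StrictMonoOn εK (Ioi 0)) (hεI : StrictMonoOn εI (Ioi 0))
    (hK' : ∀ t ∈ Ioi (0:ℝ), HasDerivAt εK (cvK t) t)
    (hI' : ∀ t ∈ Ioi (0:ℝ), HasDerivAt εI (cvI t) t)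
    (hcvK : ∀ t ∈ Ioi (0:ℝ), 0 < cvK t) (hcvI : ∀ t ∈ Ioi (0:ℝ), 0 < cvI t)
    (T TK TI Tstar : ℝ) (hT : 0 < T) (hTK : 0 < TK) (hTI : 0 < TI) (hTstar : 0 < Tstar)
    (hcons : εK TK + εI TI = εK T + εI T)
    (TKrel TIrel : ℝ → ℝ)
    (hTKrel : ∀ θ ∈ Icc (0:ℝ) 1, 0 < TKrel θ ∧
      εK (TKrel θ) = (1 - θ) * εK TK + θ * εK T)
    (hTIrel : ∀ θ ∈ Icc (0:ℝ) 1, 0 < TIrel θ ∧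
      εI (TIrel θ) = (1 - θ) * εI TI + θ * εI T)
    (S : ℝ → ℝ)
    (hS : ∀ θ, S θ = (∫ τ in Tstar..TKrel θ, cvK τ / τ) + ∫ τ in Tstar..TIrel θ, cvI τ / τ) :
    ConcaveOn ℝ (Icc (0:ℝ) 1) S ∧
    derivWithin S (Icc (0:ℝ) 1) 1 = 0 ∧
    MonotoneOn S (Icc (0:ℝ) 1) ∧
    ∀ θ ∈ Icc (0:ℝ) 1, S 0 ≤ S θ := by
  rcases le_total (εK TK) (εK T) with h | h
  · exact S_aux εK εI cvK cvI hεK hεI hK' hI' hcvK hcvI T TK TI Tstar hT hTK hTI hTstar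
      hcons TKrel TIrel hTKrel hTIrel S hS h
  · exact S_aux εI εK cvI cvK hεI hεK hI' hK' hcvI hcvK T TI TK Tstar hT hTI hTK hTstar
      (by linarith) TIrel TKrel hTIrel hTKrel S (fun θ => by rw [hS θ]; ring) (by linarith)
end

section
/- Under the hypotheses of the previous statement, the second derivative of S satisfies S''(θ) = -(ε^K_E(T)-ε^K_E(T^K))²/(c_v^K(T^K_rel) (T^K_rel)²) - (ε^I_E(T)-ε^I_E(T^I))²/(c_v^I(T^I_rel) (T^I_rel)²) ≤ 0, and at θ = 1 one has T^K_rel(1) = T and T^I_rel(1) = T, whence S'(1) = 0 by the constraint ε^K_E(T^K) + ε^I_E(T^I) = ε^K_E(T) + ε^I_E(T). -/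
open Real Set

theorem S_second_derivative
    (εK εI cvK cvI : ℝ → ℝ)
    (hεK : StrictMonoOn εK (Ioi 0)) (hεI : StrictMonoOn εI (Ioi 0))
    (hK' : ∀ t ∈ Ioi (0:ℝ), HasDerivAt εK (cvK t) t)
    (hI' : ∀ t ∈ Ioi (0:ℝ), HasDerivAt εI (cvI t) t)
    (hcvK : ∀ t ∈ Ioi (0:ℝ), 0 < cvK t) (hcvI : ∀ t ∈ Ioi (0:ℝ), 0 < cvI t)
    (T TK TI : ℝ) (hT : 0 < T) (hTK : 0 < TK) (hTI : 0 < TI)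
    (hcons : εK TK + εI TI = εK T + εI T)
    (TKrel TIrel : ℝ → ℝ)
    (hTKrel : ∀ θ ∈ Icc (0:ℝ) 1, 0 < TKrel θ ∧
      εK (TKrel θ) = (1 - θ) * εK TK + θ * εK T)
    (hTIrel : ∀ θ ∈ Icc (0:ℝ) 1, 0 < TIrel θ ∧
      εI (TIrel θ) = (1 - θ) * εI TI + θ * εI T)
    (hTKdiff : ∀ θ ∈ Icc (0:ℝ) 1, DifferentiableAt ℝ TKrel θ)
    (hTIdiff : ∀ θ ∈ Icc (0:ℝ) 1, DifferentiableAt ℝ TIrel θ)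
    (Sd : ℝ → ℝ)
    (hSd : ∀ θ, Sd θ = (εK T - εK TK) / TKrel θ + (εI T - εI TI) / TIrel θ) :
    (∀ θ ∈ Ioo (0:ℝ) 1,
      deriv Sd θ =
        -(εK T - εK TK) ^ 2 / (cvK (TKrel θ) * (TKrel θ) ^ 2)
          - (εI T - εI TI) ^ 2 / (cvI (TIrel θ) * (TIrel θ) ^ 2) ∧
      deriv Sd θ ≤ 0) ∧
    TKrel 1 = T ∧ TIrel 1 = T ∧ Sd 1 = 0 := by
  have hK1 := hTKrel 1 (by norm_num)
  have hI1 := hTIrel 1 (by norm_num)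
  have hTKrel1 : TKrel 1 = T := by
    have h : εK (TKrel 1) = εK T := by
      rw [hK1.2]; ring
    exact hεK.injOn (mem_Ioi.mpr hK1.1) (mem_Ioi.mpr hT) h
  have hTIrel1 : TIrel 1 = T := by
    have h : εI (TIrel 1) = εI T := by
      rw [hI1.2]; ring
    exact hεI.injOn (mem_Ioi.mpr hI1.1) (mem_Ioi.mpr hT) h
  have hSd1 : Sd 1 = 0 := by
    rw [hSd 1, hTKrel1, hTIrel1]
    rw [div_add_div _ _ (ne_of_gt hT) (ne_of_gt hT)]
    rw [div_eq_zero_iff]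
    left; nlinarith [hcons]
  refine ⟨?_, hTKrel1, hTIrel1, hSd1⟩
  intro θ hθ
  have hmem : θ ∈ Icc (0:ℝ) 1 := Ioo_subset_Icc_self hθ
  have hnb : Icc (0:ℝ) 1 ∈ nhds θ := Icc_mem_nhds hθ.1 hθ.2
  have hKθ := hTKrel θ hmem
  have hIθ := hTIrel θ hmem
  set a := εK T - εK TK with ha
  set b := εI T - εI TI with hb
  -- derivative of TKrel
  have hdK : HasDerivAt TKrel (deriv TKrel θ) θ := (hTKdiff θ hmem).hasDerivAt
  have hdI : HasDerivAt TIrel (deriv TIrel θ) θ := (hTIdiff θ hmem).hasDerivAt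
  have hcompK : HasDerivAt (εK ∘ TKrel) (cvK (TKrel θ) * deriv TKrel θ) θ :=
    (hK' _ (mem_Ioi.mpr hKθ.1)).comp θ hdK
  have hcompI : HasDerivAt (εI ∘ TIrel) (cvI (TIrel θ) * deriv TIrel θ) θ :=
    (hI' _ (mem_Ioi.mpr hIθ.1)).comp θ hdI
  have hgK : HasDerivAt (fun x : ℝ => (1 - x) * εK TK + x * εK T) a θ := by
    have h1 : HasDerivAt (fun x : ℝ => (1 - x) * εK TK + x * εK T)
        ((0 - 1) * εK TK + 1 * εK T) θ :=
      (((hasDerivAt_const θ (1:ℝ)).sub (hasDerivAt_id θ)).mul_const _).add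
        ((hasDerivAt_id θ).mul_const _)
    convert h1 using 1; ring
  have hgI : HasDerivAt (fun x : ℝ => (1 - x) * εI TI + x * εI T) b θ := by
    have h1 : HasDerivAt (fun x : ℝ => (1 - x) * εI TI + x * εI T)
        ((0 - 1) * εI TI + 1 * εI T) θ :=
      (((hasDerivAt_const θ (1:ℝ)).sub (hasDerivAt_id θ)).mul_const _).add
        ((hasDerivAt_id θ).mul_const _)
    convert h1 using 1; ring
  have heqK : (εK ∘ TKrel) =ᶠ[nhds θ] (fun x : ℝ => (1 - x) * εK TK + x * εK T) :=
    Filter.eventuallyEq_of_mem hnb (fun x hx => (hTKrel x hx).2)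
  have heqI : (εI ∘ TIrel) =ᶠ[nhds θ] (fun x : ℝ => (1 - x) * εI TI + x * εI T) :=
    Filter.eventuallyEq_of_mem hnb (fun x hx => (hTIrel x hx).2)
  have hcompK' : HasDerivAt (εK ∘ TKrel) a θ := hgK.congr_of_eventuallyEq heqK
  have hcompI' : HasDerivAt (εI ∘ TIrel) b θ := hgI.congr_of_eventuallyEq heqI
  have hKeq : cvK (TKrel θ) * deriv TKrel θ = a := hcompK.unique hcompK'
  have hIeq : cvI (TIrel θ) * deriv TIrel θ = b := hcompI.unique hcompI'
  have hKne : TKrel θ ≠ 0 := ne_of_gt hKθ.1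
  have hIne : TIrel θ ≠ 0 := ne_of_gt hIθ.1
  have hcvKθ := hcvK _ (mem_Ioi.mpr hKθ.1)
  have hcvIθ := hcvI _ (mem_Ioi.mpr hIθ.1)
  have hF : HasDerivAt (fun x => a / TKrel x + b / TIrel x)
      ((0 * TKrel θ - a * deriv TKrel θ) / (TKrel θ) ^ 2
        + (0 * TIrel θ - b * deriv TIrel θ) / (TIrel θ) ^ 2) θ :=
    ((hasDerivAt_const θ a).div hdK hKne).add ((hasDerivAt_const θ b).div hdI hIne)
  have hSdF : Sd = fun x => a / TKrel x + b / TIrel x := funext hSd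
  have hderiv : deriv Sd θ = (0 * TKrel θ - a * deriv TKrel θ) / (TKrel θ) ^ 2
        + (0 * TIrel θ - b * deriv TIrel θ) / (TIrel θ) ^ 2 := by
    rw [hSdF]; exact hF.deriv
  have hdKval : deriv TKrel θ = a / cvK (TKrel θ) := by
    field_simp; linarith [hKeq]
  have hdIval : deriv TIrel θ = b / cvI (TIrel θ) := by
    field_simp; linarith [hIeq]
  have hmain : deriv Sd θ = -a ^ 2 / (cvK (TKrel θ) * (TKrel θ) ^ 2)
      - b ^ 2 / (cvI (TIrel θ) * (TIrel θ) ^ 2) := by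
    rw [hderiv, hdKval, hdIval]
    field_simp
    ring
  refine ⟨hmain, ?_⟩
  rw [hmain]
  have h1 : -a ^ 2 / (cvK (TKrel θ) * (TKrel θ) ^ 2) ≤ 0 := by
    apply div_nonpos_of_nonpos_of_nonneg
    · nlinarith [sq_nonneg a]
    · positivity
  have h2 : b ^ 2 / (cvI (TIrel θ) * (TIrel θ) ^ 2) ≥ 0 := by positivity
  linarith
end
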